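/- For 0 < q < 1 and n ≥ 0, the limit as z → 0+ of I_{n-1}(q;z) · I_{n+1}(q;z) / (I_n(q;z))^2 equals (1 - q^{n+1})/(1 - q^{n+2}); hence the constant (1 - q^{n+1})/(1 - q^{n+2}) in the Turán inequality for I_n is best possible. -/

import Mathlib

open Finset Filter Topology

noncomputable def qPoch (q : ℝ) (m : ℕ) : ℝ := ∏ j ∈ Finset.range m, (1 - q ^ (j + 1))

/-- Tail of the q-exponential e(q;z) starting at index m; I_n(q;z) = qexpTail q z (n+1). -/
noncomputable def qexpTail (q z : ℝ) (m : ℕ) : ℝ := ∑' k : ℕ, z ^ (m + k) / qPoch q (m + k)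

/-!
Write `qexpTail q z m = z ^ m * S_m(z)` with `S_m(z) = ∑ₖ z ^ k / (q;q)_{m+k}` (`qexpTailScaled`).
Since `(q;q)_j ≥ (1 - q) ^ j`, for `|z| ≤ (1 - q) / 2` the terms of `S_m` are dominated by
`(1 - q)⁻ᵐ 2⁻ᵏ`, so by dominated convergence `S_m(z) → 1 / (q;q)_m` as `z → 0`. The powers of `z`
cancel in the Turán ratio, which therefore tends to
`(q;q)_{n+1}² / ((q;q)_n (q;q)_{n+2}) = (1 - q^{n+1}) / (1 - q^{n+2})`.
-/

lemma qPoch_succ (q : ℝ) (m : ℕ) : qPoch q (m + 1) = qPoch q m * (1 - q ^ (m + 1)) :=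
  Finset.prod_range_succ _ _

lemma pow_le_qPoch {q : ℝ} (hq0 : 0 ≤ q) (hq1 : q ≤ 1) (m : ℕ) : (1 - q) ^ m ≤ qPoch q m := by
  calc (1 - q) ^ m = ∏ _j ∈ range m, (1 - q) := by rw [prod_const, card_range]
    _ ≤ qPoch q m := Finset.prod_le_prod (fun _ _ => sub_nonneg.2 hq1) fun j _ =>
        sub_le_sub_left (pow_le_of_le_one hq0 hq1 j.succ_ne_zero) 1

lemma qPoch_pos {q : ℝ} (hq0 : 0 ≤ q) (hq1 : q < 1) (m : ℕ) : 0 < qPoch q m :=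
  (pow_pos (sub_pos.2 hq1) m).trans_le (pow_le_qPoch hq0 hq1.le m)

lemma qPoch_sq_div_mul_qPoch {q : ℝ} {n : ℕ} (h : qPoch q (n + 1) ≠ 0) :
    qPoch q (n + 1) ^ 2 / (qPoch q n * qPoch q (n + 2)) = (1 - q ^ (n + 1)) / (1 - q ^ (n + 2)) := by
  rw [qPoch_succ q n] at h
  rw [qPoch_succ q (n + 1), qPoch_succ q n]
  have h₀ : qPoch q n ≠ 0 := left_ne_zero_of_mul h
  have h₁ : 1 - q ^ (n + 1) ≠ 0 := right_ne_zero_of_mul h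
  field_simp

noncomputable def qexpTailScaled (q z : ℝ) (m : ℕ) : ℝ := ∑' k : ℕ, z ^ k / qPoch q (m + k)

lemma qexpTail_eq_pow_mul_qexpTailScaled (q z : ℝ) (m : ℕ) :
    qexpTail q z m = z ^ m * qexpTailScaled q z m := by
  rw [qexpTail, qexpTailScaled, ← tsum_mul_left]
  simp only [pow_add, mul_div_assoc]

lemma tendsto_qexpTailScaled {q : ℝ} (hq0 : 0 ≤ q) (hq1 : q < 1) (m : ℕ) :
    Tendsto (fun z => qexpTailScaled q z m) (𝓝 0) (𝓝 (qPoch q m)⁻¹) := by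
  have hq : 0 < 1 - q := sub_pos.2 hq1
  have hlim : (qPoch q m)⁻¹ = ∑' k : ℕ, (0 : ℝ) ^ k / qPoch q (m + k) := by
    rw [tsum_eq_single 0 fun k hk => by simp [hk]]
    simp
  rw [hlim]
  refine tendsto_tsum_of_dominated_convergence (f := fun z k => z ^ k / qPoch q (m + k))
    (bound := fun k => (1 - q)⁻¹ ^ m * (1 / 2) ^ k)
    (summable_geometric_two.mul_left _) (fun k => ?_) ?_
  · exact ((continuous_pow k).div_const _).tendsto 0
  · filter_upwards [Metric.closedBall_mem_nhds (0 : ℝ) (half_pos hq)] with z hz k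
    have hz : |z| ≤ (1 - q) / 2 := by simpa using hz
    rw [Real.norm_eq_abs, abs_div, abs_pow, abs_of_pos (qPoch_pos hq0 hq1 _)]
    calc |z| ^ k / qPoch q (m + k) ≤ ((1 - q) / 2) ^ k / (1 - q) ^ (m + k) :=
          div_le_div₀ (by positivity) (pow_le_pow_left₀ (abs_nonneg z) hz k) (by positivity)
            (pow_le_qPoch hq0 hq1.le _)
      _ = (1 - q)⁻¹ ^ m * (1 / 2) ^ k := by
          rw [pow_add, div_pow, one_div, inv_pow, inv_pow]
          field_simp

theorem turan_I_best_constant (q : ℝ) (n : ℕ) (hq0 : 0 < q) (hq1 : q < 1) :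
    Tendsto (fun z : ℝ => qexpTail q z n * qexpTail q z (n + 2) / (qexpTail q z (n + 1)) ^ 2)
      (𝓝[>] 0) (𝓝 ((1 - q ^ (n + 1)) / (1 - q ^ (n + 2)))) := by
  have hP : qPoch q (n + 1) ≠ 0 := (qPoch_pos hq0.le hq1 _).ne'
  have hS := ((tendsto_qexpTailScaled hq0.le hq1 n).mul (tendsto_qexpTailScaled hq0.le hq1 (n + 2))).div
    ((tendsto_qexpTailScaled hq0.le hq1 (n + 1)).pow 2) (by simpa using hP)
  rw [inv_pow, div_inv_eq_mul, ← mul_inv, inv_mul_eq_div, qPoch_sq_div_mul_qPoch hP] at hS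
  refine Tendsto.congr' ?_ (hS.mono_left nhdsWithin_le_nhds)
  filter_upwards [self_mem_nhdsWithin] with z (hz : 0 < z)
  simp only [Pi.div_apply, qexpTail_eq_pow_mul_qexpTailScaled]
  field_simp
  ring
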